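/- Let ⟨·,·⟩ be a symmetric bilinear form of signature (1,n) on ℝ^{n+1}. The set C' = {x : ⟨x,x⟩ > 0} has exactly two connected components, and two vectors x, y ∈ C' lie in the same connected component if and only if ⟨x,y⟩ > 0. -/
import Mathlib

open Finset

/-- Cauchy–Schwarz consequence: for Lorentz-positive vectors, `B x y > 0 ↔ x0 y0 > 0`. -/
private lemma lorentz_aux {n : ℕ} {x y : Fin (n + 1) → ℝ}
    (hx : (∑ i : Fin n, x i.succ * x i.succ) < x 0 * x 0)
    (hy : (∑ i : Fin n, y i.succ * y i.succ) < y 0 * y 0) :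
    (0 < x 0 * y 0 - ∑ i : Fin n, x i.succ * y i.succ) ↔ 0 < x 0 * y 0 := by
  have cs := Finset.sum_mul_sq_le_sq_mul_sq Finset.univ
    (fun i : Fin n => x i.succ) (fun i : Fin n => y i.succ)
  simp only [pow_two] at cs
  have hsx : 0 ≤ ∑ i : Fin n, x i.succ * x i.succ :=
    Finset.sum_nonneg fun i _ => mul_self_nonneg _
  have hsy : 0 ≤ ∑ i : Fin n, y i.succ * y i.succ :=
    Finset.sum_nonneg fun i _ => mul_self_nonneg _
  constructor
  · intro h
    nlinarith [cs, hsx, hsy, hx, hy]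
  · intro h
    nlinarith [cs, hsx, hsy, hx, hy]

/-- The half-cone with the sign of `x 0` is convex. -/
private lemma lorentz_convex {n : ℕ} (x : Fin (n + 1) → ℝ) :
    Convex ℝ {v : Fin (n + 1) → ℝ |
      (∑ i : Fin n, v i.succ * v i.succ) < v 0 * v 0 ∧ 0 < v 0 * x 0} := by
  intro v hv w hw t s ht hs hts
  obtain ⟨hv1, hv2⟩ := hv
  obtain ⟨hw1, hw2⟩ := hw
  have hsv : 0 ≤ ∑ i : Fin n, v i.succ * v i.succ :=
    Finset.sum_nonneg fun i _ => mul_self_nonneg _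
  have hsw : 0 ≤ ∑ i : Fin n, w i.succ * w i.succ :=
    Finset.sum_nonneg fun i _ => mul_self_nonneg _
  have hvw : 0 < v 0 * w 0 := by nlinarith [hv2, hw2, mul_self_nonneg (x 0)]
  have cs := Finset.sum_mul_sq_le_sq_mul_sq Finset.univ
    (fun i : Fin n => v i.succ) (fun i : Fin n => w i.succ)
  simp only [pow_two] at cs
  have key : (∑ i : Fin n, v i.succ * w i.succ) < v 0 * w 0 := by
    nlinarith [cs, hsv, hsw, hv1, hw1, hvw]
  have hu : ∀ i : Fin (n + 1), (t • v + s • w) i = t * v i + s * w i := by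
    intro i; simp [smul_eq_mul]
  have expand : (∑ i : Fin n, (t • v + s • w) i.succ * (t • v + s • w) i.succ)
      = t * t * (∑ i : Fin n, v i.succ * v i.succ)
        + 2 * (t * s) * (∑ i : Fin n, v i.succ * w i.succ)
        + s * s * (∑ i : Fin n, w i.succ * w i.succ) := by
    simp only [hu]
    rw [Finset.mul_sum, Finset.mul_sum, Finset.mul_sum, ← Finset.sum_add_distrib,
      ← Finset.sum_add_distrib]
    exact Finset.sum_congr rfl fun i _ => by ring
  have h2 : 0 < t ∨ 0 < s := by
    by_contra hcon
    push_neg at hcon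
    nlinarith [hcon.1, hcon.2, hts]
  constructor
  · show (∑ i : Fin n, (t • v + s • w) i.succ * (t • v + s • w) i.succ)
      < (t • v + s • w) 0 * (t • v + s • w) 0
    rw [expand, hu 0]
    have hA : 0 ≤ t * t * (v 0 * v 0 - ∑ i : Fin n, v i.succ * v i.succ) :=
      mul_nonneg (mul_self_nonneg t) (by linarith)
    have hBB : 0 ≤ s * s * (w 0 * w 0 - ∑ i : Fin n, w i.succ * w i.succ) :=
      mul_nonneg (mul_self_nonneg s) (by linarith)
    have hCC : 0 ≤ 2 * (t * s) * (v 0 * w 0 - ∑ i : Fin n, v i.succ * w i.succ) :=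
      mul_nonneg (by positivity) (by linarith)
    rcases h2 with h2 | h2
    · have hA' : 0 < t * t * (v 0 * v 0 - ∑ i : Fin n, v i.succ * v i.succ) :=
        mul_pos (mul_pos h2 h2) (by linarith)
      nlinarith [hA', hBB, hCC]
    · have hB' : 0 < s * s * (w 0 * w 0 - ∑ i : Fin n, w i.succ * w i.succ) :=
        mul_pos (mul_pos h2 h2) (by linarith)
      nlinarith [hA, hB', hCC]
  · show 0 < (t • v + s • w) 0 * x 0
    rw [hu 0]
    rcases h2 with h2 | h2
    · nlinarith [mul_pos h2 hv2, mul_nonneg hs hw2.le]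
    · nlinarith [mul_nonneg ht hv2.le, mul_pos h2 hw2]

/-- Same connected component iff same sign of the `0`-th coordinate. -/
private lemma lorentz_master {n : ℕ} (C' : Set (Fin (n + 1) → ℝ))
    (hC' : C' = {v : Fin (n + 1) → ℝ |
      (∑ i : Fin n, v i.succ * v i.succ) < v 0 * v 0})
    {x y : Fin (n + 1) → ℝ} (hx : x ∈ C') (hy : y ∈ C') :
    connectedComponentIn C' x = connectedComponentIn C' y ↔ 0 < x 0 * y 0 := by
  have hx' : (∑ i : Fin n, x i.succ * x i.succ) < x 0 * x 0 := by rwa [hC'] at hx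
  have hy' : (∑ i : Fin n, y i.succ * y i.succ) < y 0 * y 0 := by rwa [hC'] at hy
  have hsx : 0 ≤ ∑ i : Fin n, x i.succ * x i.succ :=
    Finset.sum_nonneg fun i _ => mul_self_nonneg _
  have hsy : 0 ≤ ∑ i : Fin n, y i.succ * y i.succ :=
    Finset.sum_nonneg fun i _ => mul_self_nonneg _
  have hx0 : x 0 ≠ 0 := by intro h; rw [h] at hx'; nlinarith
  have hy0 : y 0 ≠ 0 := by intro h; rw [h] at hy'; nlinarith
  constructor
  · -- intermediate value argument
    intro h
    by_contra hcon
    push_neg at hcon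
    have hne : x 0 * y 0 < 0 := lt_of_le_of_ne hcon (mul_ne_zero hx0 hy0)
    set s := connectedComponentIn C' x with hs
    have hxs : x ∈ s := mem_connectedComponentIn hx
    have hys : y ∈ s := h ▸ mem_connectedComponentIn hy
    have hpre : IsPreconnected s := isPreconnected_connectedComponentIn
    have hsub : s ⊆ C' := connectedComponentIn_subset C' x
    have himg : IsPreconnected ((fun v : Fin (n + 1) → ℝ => v 0) '' s) :=
      hpre.image _ (continuous_apply 0).continuousOn
    have hord := himg.ordConnected
    have hxi : x 0 ∈ (fun v : Fin (n + 1) → ℝ => v 0) '' s := ⟨x, hxs, rfl⟩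
    have hyi : y 0 ∈ (fun v : Fin (n + 1) → ℝ => v 0) '' s := ⟨y, hys, rfl⟩
    have h0 : (0 : ℝ) ∉ (fun v : Fin (n + 1) → ℝ => v 0) '' s := by
      rintro ⟨v, hvs, hv0⟩
      have := hsub hvs
      rw [hC'] at this
      have hsvv : 0 ≤ ∑ i : Fin n, v i.succ * v i.succ :=
        Finset.sum_nonneg fun i _ => mul_self_nonneg _
      have hv0' : v 0 = 0 := hv0
      rw [Set.mem_setOf_eq, hv0'] at this
      nlinarith
    rcases mul_neg_iff.mp hne with ⟨hxp, hyn⟩ | ⟨hxn, hyp⟩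
    · exact h0 (hord.out hyi hxi ⟨hyn.le, hxp.le⟩)
    · exact h0 (hord.out hxi hyi ⟨hxn.le, hyp.le⟩)
  · intro h
    set S := {v : Fin (n + 1) → ℝ |
      (∑ i : Fin n, v i.succ * v i.succ) < v 0 * v 0 ∧ 0 < v 0 * x 0} with hS
    have hxS : x ∈ S := ⟨hx', mul_self_pos.mpr hx0⟩
    have hyS : y ∈ S := ⟨hy', by rwa [mul_comm] at h⟩
    have hsub : S ⊆ C' := fun v hv => by rw [hC']; exact hv.1
    have hyc : y ∈ connectedComponentIn C' x :=
      (lorentz_convex x).isPreconnected.subset_connectedComponentIn hxS hsub hyS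
    exact connectedComponentIn_eq hyc

/-- The cone `C' = {x | B x x > 0}` of a Lorentzian form of signature `(1,n)` has
exactly two connected components, and `x, y ∈ C'` lie in the same component
iff `B x y > 0`. -/
theorem stmt2 (n : ℕ)
    (B : (Fin (n + 1) → ℝ) → (Fin (n + 1) → ℝ) → ℝ)
    (hB : ∀ x y, B x y = x 0 * y 0 - ∑ i : Fin n, x i.succ * y i.succ)
    (C' : Set (Fin (n + 1) → ℝ)) (hC' : C' = {x | 0 < B x x}) :
    Nat.card (ConnectedComponents C') = 2 ∧
    ∀ x ∈ C', ∀ y ∈ C',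
      (connectedComponentIn C' x = connectedComponentIn C' y ↔ 0 < B x y) := by
  have hset : C' = {v : Fin (n + 1) → ℝ |
      (∑ i : Fin n, v i.succ * v i.succ) < v 0 * v 0} := by
    rw [hC']; ext v; simp [hB, sub_pos]
  have hmem : ∀ v : Fin (n + 1) → ℝ,
      v ∈ C' ↔ (∑ i : Fin n, v i.succ * v i.succ) < v 0 * v 0 := by
    intro v; rw [hset]; rfl
  -- the two base points
  set p : Fin (n + 1) → ℝ := fun i => if i = 0 then 1 else 0 with hp
  set q : Fin (n + 1) → ℝ := fun i => if i = 0 then -1 else 0 with hq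
  have hp0 : p 0 = 1 := by simp [hp]
  have hq0 : q 0 = -1 := by simp [hq]
  have hpC : p ∈ C' := by
    rw [hmem]
    simp [hp, Fin.succ_ne_zero]
  have hqC : q ∈ C' := by
    rw [hmem]
    simp [hq, Fin.succ_ne_zero]
  -- components correspond via `connectedComponentIn`
  have comp_iff : ∀ z w : ↥C',
      (ConnectedComponents.mk z = ConnectedComponents.mk w) ↔
        connectedComponentIn C' z.1 = connectedComponentIn C' w.1 := by
    intro z w
    rw [ConnectedComponents.coe_eq_coe, connectedComponentIn_eq_image z.2,
      connectedComponentIn_eq_image w.2,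
      Set.image_eq_image Subtype.val_injective]
  constructor
  · -- exactly two components
    classical
    set e : Bool → ConnectedComponents ↥C' :=
      fun b => ConnectedComponents.mk (if b then ⟨p, hpC⟩ else ⟨q, hqC⟩) with he
    have hbij : Function.Bijective e := by
      constructor
      · intro a b hab
        cases a <;> cases b <;> first
          | rfl
          | (exfalso
             simp only [he, if_true, if_false, Bool.false_eq_true] at hab
             first
               | (have := (lorentz_master C' hset hpC hqC).mp ((comp_iff _ _).mp hab)
                  rw [hp0, hq0] at this; norm_num at this)
               | (have := (lorentz_master C' hset hqC hpC).mp ((comp_iff _ _).mp hab)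
                  rw [hp0, hq0] at this; norm_num at this))
      · intro c
        obtain ⟨z, rfl⟩ := ConnectedComponents.surjective_coe c
        have hz := (hmem z.1).mp z.2
        have hsz : 0 ≤ ∑ i : Fin n, z.1 i.succ * z.1 i.succ :=
          Finset.sum_nonneg fun i _ => mul_self_nonneg _
        have hz0 : z.1 0 ≠ 0 := by intro h; rw [h] at hz; nlinarith
        rcases hz0.lt_or_gt with hlt | hlt
        · refine ⟨false, ?_⟩
          simp only [he, if_false, Bool.false_eq_true]
          refine (comp_iff _ _).mpr ?_
          refine (lorentz_master C' hset hqC z.2).mpr ?_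
          rw [hq0]; nlinarith
        · refine ⟨true, ?_⟩
          simp only [he, if_true]
          refine (comp_iff _ _).mpr ?_
          refine (lorentz_master C' hset hpC z.2).mpr ?_
          rw [hp0]; nlinarith
    calc Nat.card (ConnectedComponents ↥C') = Nat.card Bool :=
          Nat.card_congr (Equiv.ofBijective e hbij).symm
      _ = 2 := by simp [Nat.card_eq_fintype_card]
  · intro x hx y hy
    rw [lorentz_master C' hset hx hy, hB]
    exact (lorentz_aux ((hmem x).mp hx) ((hmem y).mp hy)).symm
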